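/- For every vector u in ℝ⁷, the 5-form identity (ι_u φ₀) ∧ φ₀ = 2 u^# ∧ ψ₀ holds, where u^# = ⟨u,·⟩ is the dual 1-form of u. (This is the identity (ξ⌟φ)∧φ = 2*(ξ⌟φ), with the Hodge dual *(ι_uφ₀) = u^#∧ψ₀ written out explicitly.) -/

import Mathlib

set_option maxHeartbeats 1600000
set_option maxRecDepth 100000

open scoped RealInnerProductSpace

noncomputable section

/-- `V7` is ℝ⁷ with its Euclidean inner product. -/
abbrev V7 : Type := EuclideanSpace ℝ (Fin 7)

/-- Evaluation of the wedge product `eⁱ ∧ eʲ ∧ eᵏ` of dual basis 1-forms on three vectors. -/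
def w3 (i j k : Fin 7) (u v w : V7) : ℝ :=
  Matrix.det !![u i, u j, u k; v i, v j, v k; w i, w j, w k]

/-- Evaluation of the wedge product `eⁱ ∧ eʲ ∧ eᵏ ∧ eˡ` on four vectors. -/
def w4 (i j k l : Fin 7) (u v w z : V7) : ℝ :=
  Matrix.det !![u i, u j, u k, u l; v i, v j, v k, v l;
                w i, w j, w k, w l; z i, z j, z k, z l]

/-- The standard G₂ 3-form φ₀ = e¹²³+e¹⁴⁵+e¹⁶⁷+e²⁴⁶−e²⁵⁷−e³⁴⁷−e³⁵⁶ (0-indexed). -/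
def phi0 (u v w : V7) : ℝ :=
  w3 0 1 2 u v w + w3 0 3 4 u v w + w3 0 5 6 u v w + w3 1 3 5 u v w
    - w3 1 4 6 u v w - w3 2 3 6 u v w - w3 2 4 5 u v w

/-- The 4-form ψ₀ = ∗φ₀ = e⁴⁵⁶⁷+e²³⁶⁷+e²³⁴⁵+e¹³⁵⁷−e¹³⁴⁶−e¹²⁵⁶−e¹²⁴⁷ (0-indexed). -/
def psi0 (u v w z : V7) : ℝ :=
  w4 3 4 5 6 u v w z + w4 1 2 5 6 u v w z + w4 1 2 3 4 u v w z + w4 0 2 4 6 u v w z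
    - w4 0 2 3 5 u v w z - w4 0 1 4 5 u v w z - w4 0 1 3 6 u v w z

/-- Evaluation of the wedge (2-form) ∧ (3-form) on five vectors, normalized by 1/(2!·3!). -/
def wedge23 (A : V7 → V7 → ℝ) (C : V7 → V7 → V7 → ℝ) (x : Fin 5 → V7) : ℝ :=
  (∑ σ : Equiv.Perm (Fin 5), ((Equiv.Perm.sign σ : ℤ) : ℝ) *
      (A (x (σ 0)) (x (σ 1)) * C (x (σ 2)) (x (σ 3)) (x (σ 4)))) / 12

/-- Evaluation of the wedge (1-form) ∧ (4-form) on five vectors, normalized by 1/(1!·4!). -/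
def wedge14 (f : V7 → ℝ) (D : V7 → V7 → V7 → V7 → ℝ) (x : Fin 5 → V7) : ℝ :=
  (∑ σ : Equiv.Perm (Fin 5), ((Equiv.Perm.sign σ : ℤ) : ℝ) *
      (f (x (σ 0)) * D (x (σ 1)) (x (σ 2)) (x (σ 3)) (x (σ 4)))) / 24

lemma det_fin_four' (A : Matrix (Fin 4) (Fin 4) ℝ) : A.det =
    A 0 0*A 1 1*A 2 2*A 3 3 - A 0 0*A 1 1*A 2 3*A 3 2 - A 0 0*A 1 2*A 2 1*A 3 3 + A 0 0*A 1 2*A 2 3*A 3 1 + A 0 0*A 1 3*A 2 1*A 3 2 - A 0 0*A 1 3*A 2 2*A 3 1 - A 0 1*A 1 0*A 2 2*A 3 3 + A 0 1*A 1 0*A 2 3*A 3 2 + A 0 1*A 1 2*A 2 0*A 3 3 - A 0 1*A 1 2*A 2 3*A 3 0 - A 0 1*A 1 3*A 2 0*A 3 2 + A 0 1*A 1 3*A 2 2*A 3 0 + A 0 2*A 1 0*A 2 1*A 3 3 - A 0 2*A 1 0*A 2 3*A 3 1 - A 0 2*A 1 1*A 2 0*A 3 3 + A 0 2*A 1 1*A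 2 3*A 3 0 + A 0 2*A 1 3*A 2 0*A 3 1 - A 0 2*A 1 3*A 2 1*A 3 0 - A 0 3*A 1 0*A 2 1*A 3 2 + A 0 3*A 1 0*A 2 2*A 3 1 + A 0 3*A 1 1*A 2 0*A 3 2 - A 0 3*A 1 1*A 2 2*A 3 0 - A 0 3*A 1 2*A 2 0*A 3 1 + A 0 3*A 1 2*A 2 1*A 3 0 := by
  rw [Matrix.det_succ_row_zero]
  simp [Fin.sum_univ_succ, Matrix.det_fin_three, Fin.succAbove,
    show ((2:Fin 3).succ : Fin 4) = 3 by decide, show (Fin.castSucc (2:Fin 3) : Fin 4) = 2 by decide,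
    show ((1:Fin 3).succ : Fin 4) = 2 by decide, show (Fin.castSucc (1:Fin 3) : Fin 4) = 1 by decide]
  ring

lemma permsum23 (A : V7 → V7 → ℝ) (C : V7 → V7 → V7 → ℝ) (x : Fin 5 → V7) :
    wedge23 A C x =
      (A (x 0) (x 1) * C (x 2) (x 3) (x 4) - A (x 0) (x 1) * C (x 2) (x 4) (x 3) - A (x 0) (x 1) * C (x 3) (x 2) (x 4) + A (x 0) (x 1) * C (x 3) (x 4) (x 2) + A (x 0) (x 1) * C (x 4) (x 2) (x 3) - A (x 0) (x 1) * C (x 4) (x 3) (x 2) - A (x 0) (x 2) * C (x 1) (x 3) (x 4) + A (x 0) (x 2) * C (x 1) (x 4) (x 3) + A (x 0) (x 2) * C (x 3) (x 1) (x 4) - A (x 0) (x 2) * C (x 3) (x 4) (x 1) - A (x 0) (x 2) * C (x 4) (x 1) (x 3) + A (x 0) (x 2) * C (x 4) (x 3) (x 1) + A (x 0) (x 3) * C (x 1) (x 2) (x 4) - A (x 0) (x 3) * C (x 1) (x 4) (x 2) - A (x 0) (x 3) * C (x 2) (x 1) (x 4) + A (x 0) (x 3) * C (x 2) (x 4) (x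 1) + A (x 0) (x 3) * C (x 4) (x 1) (x 2) - A (x 0) (x 3) * C (x 4) (x 2) (x 1) - A (x 0) (x 4) * C (x 1) (x 2) (x 3) + A (x 0) (x 4) * C (x 1) (x 3) (x 2) + A (x 0) (x 4) * C (x 2) (x 1) (x 3) - A (x 0) (x 4) * C (x 2) (x 3) (x 1) - A (x 0) (x 4) * C (x 3) (x 1) (x 2) + A (x 0) (x 4) * C (x 3) (x 2) (x 1) - A (x 1) (x 0) * C (x 2) (x 3) (x 4) + A (x 1) (x 0) * C (x 2) (x 4) (x 3) + A (x 1) (x 0) * C (x 3) (x 2) (x 4) - A (x 1) (x 0) * C (x 3) (x 4) (x 2) - A (x 1) (x 0) * C (x 4) (x 2) (x 3) + A (x 1) (x 0) * C (x 4) (x 3) (x 2) + A (x 1) (x 2) * C (x 0) (x 3) (x 4) - A (x 1) (x 2) * C (x 0) (x 4) (x 3) - A (x 1) (x 2) * C (x 3) (x 0) (x 4) + A (x 1) (x 2) * C (x 3) (x 4) (x 0) + A (x 1) (x 2) * C (x 4) (x 0) (x 3) - A (x 1) (x 2) * C (x 4) (x 3) (x 0) - A (x 1) (x 3) * C (x 0)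 (x 2) (x 4) + A (x 1) (x 3) * C (x 0) (x 4) (x 2) + A (x 1) (x 3) * C (x 2) (x 0) (x 4) - A (x 1) (x 3) * C (x 2) (x 4) (x 0) - A (x 1) (x 3) * C (x 4) (x 0) (x 2) + A (x 1) (x 3) * C (x 4) (x 2) (x 0) + A (x 1) (x 4) * C (x 0) (x 2) (x 3) - A (x 1) (x 4) * C (x 0) (x 3) (x 2) - A (x 1) (x 4) * C (x 2) (x 0) (x 3) + A (x 1) (x 4) * C (x 2) (x 3) (x 0) + A (x 1) (x 4) * C (x 3) (x 0) (x 2) - A (x 1) (x 4) * C (x 3) (x 2) (x 0) + A (x 2) (x 0) * C (x 1) (x 3) (x 4) - A (x 2) (x 0) * C (x 1) (x 4) (x 3) - A (x 2) (x 0) * C (x 3) (x 1) (x 4) + A (x 2) (x 0) * C (x 3) (x 4) (x 1) + A (x 2) (x 0) * C (x 4) (x 1) (x 3) - A (x 2) (x 0) * C (x 4) (x 3) (x 1) - A (x 2) (x 1) * C (x 0) (x 3) (x 4) + A (x 2) (x 1) * C (x 0) (x 4) (x 3) + A (x 2) (x 1) * C (x 3) (x 0) (x 4) - A (x 2) (x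 1) * C (x 3) (x 4) (x 0) - A (x 2) (x 1) * C (x 4) (x 0) (x 3) + A (x 2) (x 1) * C (x 4) (x 3) (x 0) + A (x 2) (x 3) * C (x 0) (x 1) (x 4) - A (x 2) (x 3) * C (x 0) (x 4) (x 1) - A (x 2) (x 3) * C (x 1) (x 0) (x 4) + A (x 2) (x 3) * C (x 1) (x 4) (x 0) + A (x 2) (x 3) * C (x 4) (x 0) (x 1) - A (x 2) (x 3) * C (x 4) (x 1) (x 0) - A (x 2) (x 4) * C (x 0) (x 1) (x 3) + A (x 2) (x 4) * C (x 0) (x 3) (x 1) + A (x 2) (x 4) * C (x 1) (x 0) (x 3) - A (x 2) (x 4) * C (x 1) (x 3) (x 0) - A (x 2) (x 4) * C (x 3) (x 0) (x 1) + A (x 2) (x 4) * C (x 3) (x 1) (x 0) - A (x 3) (x 0) * C (x 1) (x 2) (x 4) + A (x 3) (x 0) * C (x 1) (x 4) (x 2) + A (x 3) (x 0) * C (x 2) (x 1) (x 4) - A (x 3) (x 0) * C (x 2) (x 4) (x 1) - A (x 3) (x 0) * C (x 4) (x 1) (x 2) + A (x 3) (x 0) * C (x 4) (x 2) (x 1)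 + A (x 3) (x 1) * C (x 0) (x 2) (x 4) - A (x 3) (x 1) * C (x 0) (x 4) (x 2) - A (x 3) (x 1) * C (x 2) (x 0) (x 4) + A (x 3) (x 1) * C (x 2) (x 4) (x 0) + A (x 3) (x 1) * C (x 4) (x 0) (x 2) - A (x 3) (x 1) * C (x 4) (x 2) (x 0) - A (x 3) (x 2) * C (x 0) (x 1) (x 4) + A (x 3) (x 2) * C (x 0) (x 4) (x 1) + A (x 3) (x 2) * C (x 1) (x 0) (x 4) - A (x 3) (x 2) * C (x 1) (x 4) (x 0) - A (x 3) (x 2) * C (x 4) (x 0) (x 1) + A (x 3) (x 2) * C (x 4) (x 1) (x 0) + A (x 3) (x 4) * C (x 0) (x 1) (x 2) - A (x 3) (x 4) * C (x 0) (x 2) (x 1) - A (x 3) (x 4) * C (x 1) (x 0) (x 2) + A (x 3) (x 4) * C (x 1) (x 2) (x 0) + A (x 3) (x 4) * C (x 2) (x 0) (x 1) - A (x 3) (x 4) * C (x 2) (x 1) (x 0) + A (x 4) (x 0) * C (x 1) (x 2) (x 3) - A (x 4) (x 0) * C (x 1) (x 3) (x 2) - A (x 4) (x 0) * C (x 2)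 (x 1) (x 3) + A (x 4) (x 0) * C (x 2) (x 3) (x 1) + A (x 4) (x 0) * C (x 3) (x 1) (x 2) - A (x 4) (x 0) * C (x 3) (x 2) (x 1) - A (x 4) (x 1) * C (x 0) (x 2) (x 3) + A (x 4) (x 1) * C (x 0) (x 3) (x 2) + A (x 4) (x 1) * C (x 2) (x 0) (x 3) - A (x 4) (x 1) * C (x 2) (x 3) (x 0) - A (x 4) (x 1) * C (x 3) (x 0) (x 2) + A (x 4) (x 1) * C (x 3) (x 2) (x 0) + A (x 4) (x 2) * C (x 0) (x 1) (x 3) - A (x 4) (x 2) * C (x 0) (x 3) (x 1) - A (x 4) (x 2) * C (x 1) (x 0) (x 3) + A (x 4) (x 2) * C (x 1) (x 3) (x 0) + A (x 4) (x 2) * C (x 3) (x 0) (x 1) - A (x 4) (x 2) * C (x 3) (x 1) (x 0) - A (x 4) (x 3) * C (x 0) (x 1) (x 2) + A (x 4) (x 3) * C (x 0) (x 2) (x 1) + A (x 4) (x 3) * C (x 1) (x 0) (x 2) - A (x 4) (x 3) * C (x 1) (x 2) (x 0) - A (x 4) (x 3) * C (x 2) (x 0) (x 1) + A (x 4) (x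 3) * C (x 2) (x 1) (x 0)) / 12 := by
  unfold wedge23
  congr 1
  rw [← Equiv.sum_comp (Equiv.Perm.decomposeFin.symm), Fintype.sum_prod_type]
  simp only [Fin.sum_univ_five]
  simp only [← Equiv.sum_comp (Equiv.Perm.decomposeFin.symm :
      Fin 4 × Equiv.Perm (Fin 3) ≃ Equiv.Perm (Fin 4)), Fintype.sum_prod_type]
  simp only [Fin.sum_univ_four]
  simp only [← Equiv.sum_comp (Equiv.Perm.decomposeFin.symm :
      Fin 3 × Equiv.Perm (Fin 2) ≃ Equiv.Perm (Fin 3)), Fintype.sum_prod_type]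
  simp only [Fin.sum_univ_three,
    show (Finset.univ : Finset (Equiv.Perm (Fin 2))) = {1, Equiv.swap 0 1} by decide,
    Finset.sum_pair (show (1:Equiv.Perm (Fin 2)) ≠ Equiv.swap 0 1 by decide)]
  simp (config := {decide := true}) only [Equiv.Perm.decomposeFin.symm_sign,
    show ∀ p (e : Equiv.Perm (Fin 4)), (Equiv.Perm.decomposeFin.symm (p, e) : Equiv.Perm (Fin 5)) 1 = _ from
      fun p e => Equiv.Perm.decomposeFin_symm_apply_succ e p 0,
    show ∀ p (e : Equiv.Perm (Fin 4)), (Equiv.Perm.decomposeFin.symm (p, e) : Equiv.Perm (Fin 5)) 2 = _ from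
      fun p e => Equiv.Perm.decomposeFin_symm_apply_succ e p 1,
    show ∀ p (e : Equiv.Perm (Fin 4)), (Equiv.Perm.decomposeFin.symm (p, e) : Equiv.Perm (Fin 5)) 3 = _ from
      fun p e => Equiv.Perm.decomposeFin_symm_apply_succ e p 2,
    show ∀ p (e : Equiv.Perm (Fin 4)), (Equiv.Perm.decomposeFin.symm (p, e) : Equiv.Perm (Fin 5)) 4 = _ from
      fun p e => Equiv.Perm.decomposeFin_symm_apply_succ e p 3,
    show ∀ p (e : Equiv.Perm (Fin 3)), (Equiv.Perm.decomposeFin.symm (p, e) : Equiv.Perm (Fin 4)) 1 = _ from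
      fun p e => Equiv.Perm.decomposeFin_symm_apply_succ e p 0,
    show ∀ p (e : Equiv.Perm (Fin 3)), (Equiv.Perm.decomposeFin.symm (p, e) : Equiv.Perm (Fin 4)) 2 = _ from
      fun p e => Equiv.Perm.decomposeFin_symm_apply_succ e p 1,
    show ∀ p (e : Equiv.Perm (Fin 3)), (Equiv.Perm.decomposeFin.symm (p, e) : Equiv.Perm (Fin 4)) 3 = _ from
      fun p e => Equiv.Perm.decomposeFin_symm_apply_succ e p 2,
    show ∀ p (e : Equiv.Perm (Fin 2)), (Equiv.Perm.decomposeFin.symm (p, e) : Equiv.Perm (Fin 3)) 1 = _ from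
      fun p e => Equiv.Perm.decomposeFin_symm_apply_succ e p 0,
    show ∀ p (e : Equiv.Perm (Fin 2)), (Equiv.Perm.decomposeFin.symm (p, e) : Equiv.Perm (Fin 3)) 2 = _ from
      fun p e => Equiv.Perm.decomposeFin_symm_apply_succ e p 1,
    Equiv.Perm.decomposeFin_symm_apply_zero, Equiv.swap_apply_def,
    Equiv.Perm.sign_swap, Equiv.Perm.sign_one, Equiv.Perm.one_apply,
    if_true, if_false, ite_true, ite_false,
    show Fin.succ (0:Fin 2) = 1 by decide, show Fin.succ (1:Fin 2) = 2 by decide,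
    show Fin.succ (0:Fin 3) = 1 by decide, show Fin.succ (1:Fin 3) = 2 by decide,
    show Fin.succ (2:Fin 3) = 3 by decide, show Fin.succ (0:Fin 4) = 1 by decide,
    show Fin.succ (1:Fin 4) = 2 by decide, show Fin.succ (2:Fin 4) = 3 by decide,
    show Fin.succ (3:Fin 4) = 4 by decide]
  norm_num
  ring

lemma permsum14 (f : V7 → ℝ) (D : V7 → V7 → V7 → V7 → ℝ) (x : Fin 5 → V7) :
    wedge14 f D x =
      (f (x 0) * D (x 1) (x 2) (x 3) (x 4) - f (x 0) * D (x 1) (x 2) (x 4) (x 3) - f (x 0) * D (x 1) (x 3) (x 2) (x 4) + f (x 0) * D (x 1) (x 3) (x 4) (x 2) + f (x 0) * D (x 1) (x 4) (x 2) (x 3) - f (x 0) * D (x 1) (x 4) (x 3) (x 2) - f (x 0) * D (x 2) (x 1) (x 3) (x 4) + f (x 0) * D (x 2) (x 1) (x 4) (x 3) + f (x 0) * D (x 2) (x 3) (x 1) (x 4) - f (x 0) * D (x 2) (x 3) (x 4) (x 1) - f (x 0) * D (x 2) (x 4) (x 1) (x 3) + f (x 0) * D (x 2) (x 4) (x 3)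 (x 1) + f (x 0) * D (x 3) (x 1) (x 2) (x 4) - f (x 0) * D (x 3) (x 1) (x 4) (x 2) - f (x 0) * D (x 3) (x 2) (x 1) (x 4) + f (x 0) * D (x 3) (x 2) (x 4) (x 1) + f (x 0) * D (x 3) (x 4) (x 1) (x 2) - f (x 0) * D (x 3) (x 4) (x 2) (x 1) - f (x 0) * D (x 4) (x 1) (x 2) (x 3) + f (x 0) * D (x 4) (x 1) (x 3) (x 2) + f (x 0) * D (x 4) (x 2) (x 1) (x 3) - f (x 0) * D (x 4) (x 2) (x 3) (x 1) - f (x 0) * D (x 4) (x 3) (x 1) (x 2) + f (x 0) * D (x 4) (x 3) (x 2) (x 1) - f (x 1) * D (x 0) (x 2) (x 3) (x 4) + f (x 1) * D (x 0) (x 2) (x 4) (x 3) + f (x 1) * D (x 0) (x 3) (x 2) (x 4) - f (x 1) * D (x 0) (x 3) (x 4) (x 2) - f (x 1) * D (x 0) (x 4) (x 2) (x 3) + f (x 1) * D (x 0) (x 4) (x 3) (x 2) + f (x 1) * D (x 2) (x 0) (x 3) (x 4) - f (x 1) * D (x 2) (x 0) (x 4) (x 3) - f (x 1) * D (x 2)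 (x 3) (x 0) (x 4) + f (x 1) * D (x 2) (x 3) (x 4) (x 0) + f (x 1) * D (x 2) (x 4) (x 0) (x 3) - f (x 1) * D (x 2) (x 4) (x 3) (x 0) - f (x 1) * D (x 3) (x 0) (x 2) (x 4) + f (x 1) * D (x 3) (x 0) (x 4) (x 2) + f (x 1) * D (x 3) (x 2) (x 0) (x 4) - f (x 1) * D (x 3) (x 2) (x 4) (x 0) - f (x 1) * D (x 3) (x 4) (x 0) (x 2) + f (x 1) * D (x 3) (x 4) (x 2) (x 0) + f (x 1) * D (x 4) (x 0) (x 2) (x 3) - f (x 1) * D (x 4) (x 0) (x 3) (x 2) - f (x 1) * D (x 4) (x 2) (x 0) (x 3) + f (x 1) * D (x 4) (x 2) (x 3) (x 0) + f (x 1) * D (x 4) (x 3) (x 0) (x 2) - f (x 1) * D (x 4) (x 3) (x 2) (x 0) + f (x 2) * D (x 0) (x 1) (x 3) (x 4) - f (x 2) * D (x 0) (x 1) (x 4) (x 3) - f (x 2) * D (x 0) (x 3) (x 1) (x 4) + f (x 2) * D (x 0) (x 3) (x 4) (x 1) + f (x 2) * D (x 0) (x 4) (x 1) (x 3) - f (x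 2) * D (x 0) (x 4) (x 3) (x 1) - f (x 2) * D (x 1) (x 0) (x 3) (x 4) + f (x 2) * D (x 1) (x 0) (x 4) (x 3) + f (x 2) * D (x 1) (x 3) (x 0) (x 4) - f (x 2) * D (x 1) (x 3) (x 4) (x 0) - f (x 2) * D (x 1) (x 4) (x 0) (x 3) + f (x 2) * D (x 1) (x 4) (x 3) (x 0) + f (x 2) * D (x 3) (x 0) (x 1) (x 4) - f (x 2) * D (x 3) (x 0) (x 4) (x 1) - f (x 2) * D (x 3) (x 1) (x 0) (x 4) + f (x 2) * D (x 3) (x 1) (x 4) (x 0) + f (x 2) * D (x 3) (x 4) (x 0) (x 1) - f (x 2) * D (x 3) (x 4) (x 1) (x 0) - f (x 2) * D (x 4) (x 0) (x 1) (x 3) + f (x 2) * D (x 4) (x 0) (x 3) (x 1) + f (x 2) * D (x 4) (x 1) (x 0) (x 3) - f (x 2) * D (x 4) (x 1) (x 3) (x 0) - f (x 2) * D (x 4) (x 3) (x 0) (x 1) + f (x 2) * D (x 4) (x 3) (x 1) (x 0) - f (x 3) * D (x 0) (x 1) (x 2) (x 4) + f (x 3) * D (x 0) (x 1) (x 4)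 (x 2) + f (x 3) * D (x 0) (x 2) (x 1) (x 4) - f (x 3) * D (x 0) (x 2) (x 4) (x 1) - f (x 3) * D (x 0) (x 4) (x 1) (x 2) + f (x 3) * D (x 0) (x 4) (x 2) (x 1) + f (x 3) * D (x 1) (x 0) (x 2) (x 4) - f (x 3) * D (x 1) (x 0) (x 4) (x 2) - f (x 3) * D (x 1) (x 2) (x 0) (x 4) + f (x 3) * D (x 1) (x 2) (x 4) (x 0) + f (x 3) * D (x 1) (x 4) (x 0) (x 2) - f (x 3) * D (x 1) (x 4) (x 2) (x 0) - f (x 3) * D (x 2) (x 0) (x 1) (x 4) + f (x 3) * D (x 2) (x 0) (x 4) (x 1) + f (x 3) * D (x 2) (x 1) (x 0) (x 4) - f (x 3) * D (x 2) (x 1) (x 4) (x 0) - f (x 3) * D (x 2) (x 4) (x 0) (x 1) + f (x 3) * D (x 2) (x 4) (x 1) (x 0) + f (x 3) * D (x 4) (x 0) (x 1) (x 2) - f (x 3) * D (x 4) (x 0) (x 2) (x 1) - f (x 3) * D (x 4) (x 1) (x 0) (x 2) + f (x 3) * D (x 4) (x 1) (x 2) (x 0) + f (x 3) * D (x 4)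 (x 2) (x 0) (x 1) - f (x 3) * D (x 4) (x 2) (x 1) (x 0) + f (x 4) * D (x 0) (x 1) (x 2) (x 3) - f (x 4) * D (x 0) (x 1) (x 3) (x 2) - f (x 4) * D (x 0) (x 2) (x 1) (x 3) + f (x 4) * D (x 0) (x 2) (x 3) (x 1) + f (x 4) * D (x 0) (x 3) (x 1) (x 2) - f (x 4) * D (x 0) (x 3) (x 2) (x 1) - f (x 4) * D (x 1) (x 0) (x 2) (x 3) + f (x 4) * D (x 1) (x 0) (x 3) (x 2) + f (x 4) * D (x 1) (x 2) (x 0) (x 3) - f (x 4) * D (x 1) (x 2) (x 3) (x 0) - f (x 4) * D (x 1) (x 3) (x 0) (x 2) + f (x 4) * D (x 1) (x 3) (x 2) (x 0) + f (x 4) * D (x 2) (x 0) (x 1) (x 3) - f (x 4) * D (x 2) (x 0) (x 3) (x 1) - f (x 4) * D (x 2) (x 1) (x 0) (x 3) + f (x 4) * D (x 2) (x 1) (x 3) (x 0) + f (x 4) * D (x 2) (x 3) (x 0) (x 1) - f (x 4) * D (x 2) (x 3) (x 1) (x 0) - f (x 4) * D (x 3) (x 0) (x 1) (x 2) + f (x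 4) * D (x 3) (x 0) (x 2) (x 1) + f (x 4) * D (x 3) (x 1) (x 0) (x 2) - f (x 4) * D (x 3) (x 1) (x 2) (x 0) - f (x 4) * D (x 3) (x 2) (x 0) (x 1) + f (x 4) * D (x 3) (x 2) (x 1) (x 0)) / 24 := by
  unfold wedge14
  congr 1
  rw [← Equiv.sum_comp (Equiv.Perm.decomposeFin.symm), Fintype.sum_prod_type]
  simp only [Fin.sum_univ_five]
  simp only [← Equiv.sum_comp (Equiv.Perm.decomposeFin.symm :
      Fin 4 × Equiv.Perm (Fin 3) ≃ Equiv.Perm (Fin 4)), Fintype.sum_prod_type]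
  simp only [Fin.sum_univ_four]
  simp only [← Equiv.sum_comp (Equiv.Perm.decomposeFin.symm :
      Fin 3 × Equiv.Perm (Fin 2) ≃ Equiv.Perm (Fin 3)), Fintype.sum_prod_type]
  simp only [Fin.sum_univ_three,
    show (Finset.univ : Finset (Equiv.Perm (Fin 2))) = {1, Equiv.swap 0 1} by decide,
    Finset.sum_pair (show (1:Equiv.Perm (Fin 2)) ≠ Equiv.swap 0 1 by decide)]
  simp (config := {decide := true}) only [Equiv.Perm.decomposeFin.symm_sign,
    show ∀ p (e : Equiv.Perm (Fin 4)), (Equiv.Perm.decomposeFin.symm (p, e) : Equiv.Perm (Fin 5)) 1 = _ from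
      fun p e => Equiv.Perm.decomposeFin_symm_apply_succ e p 0,
    show ∀ p (e : Equiv.Perm (Fin 4)), (Equiv.Perm.decomposeFin.symm (p, e) : Equiv.Perm (Fin 5)) 2 = _ from
      fun p e => Equiv.Perm.decomposeFin_symm_apply_succ e p 1,
    show ∀ p (e : Equiv.Perm (Fin 4)), (Equiv.Perm.decomposeFin.symm (p, e) : Equiv.Perm (Fin 5)) 3 = _ from
      fun p e => Equiv.Perm.decomposeFin_symm_apply_succ e p 2,
    show ∀ p (e : Equiv.Perm (Fin 4)), (Equiv.Perm.decomposeFin.symm (p, e) : Equiv.Perm (Fin 5)) 4 = _ from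
      fun p e => Equiv.Perm.decomposeFin_symm_apply_succ e p 3,
    show ∀ p (e : Equiv.Perm (Fin 3)), (Equiv.Perm.decomposeFin.symm (p, e) : Equiv.Perm (Fin 4)) 1 = _ from
      fun p e => Equiv.Perm.decomposeFin_symm_apply_succ e p 0,
    show ∀ p (e : Equiv.Perm (Fin 3)), (Equiv.Perm.decomposeFin.symm (p, e) : Equiv.Perm (Fin 4)) 2 = _ from
      fun p e => Equiv.Perm.decomposeFin_symm_apply_succ e p 1,
    show ∀ p (e : Equiv.Perm (Fin 3)), (Equiv.Perm.decomposeFin.symm (p, e) : Equiv.Perm (Fin 4)) 3 = _ from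
      fun p e => Equiv.Perm.decomposeFin_symm_apply_succ e p 2,
    show ∀ p (e : Equiv.Perm (Fin 2)), (Equiv.Perm.decomposeFin.symm (p, e) : Equiv.Perm (Fin 3)) 1 = _ from
      fun p e => Equiv.Perm.decomposeFin_symm_apply_succ e p 0,
    show ∀ p (e : Equiv.Perm (Fin 2)), (Equiv.Perm.decomposeFin.symm (p, e) : Equiv.Perm (Fin 3)) 2 = _ from
      fun p e => Equiv.Perm.decomposeFin_symm_apply_succ e p 1,
    Equiv.Perm.decomposeFin_symm_apply_zero, Equiv.swap_apply_def,
    Equiv.Perm.sign_swap, Equiv.Perm.sign_one, Equiv.Perm.one_apply,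
    if_true, if_false, ite_true, ite_false,
    show Fin.succ (0:Fin 2) = 1 by decide, show Fin.succ (1:Fin 2) = 2 by decide,
    show Fin.succ (0:Fin 3) = 1 by decide, show Fin.succ (1:Fin 3) = 2 by decide,
    show Fin.succ (2:Fin 3) = 3 by decide, show Fin.succ (0:Fin 4) = 1 by decide,
    show Fin.succ (1:Fin 4) = 2 by decide, show Fin.succ (2:Fin 4) = 3 by decide,
    show Fin.succ (3:Fin 4) = 4 by decide]
  norm_num
  ring


lemma phi0_expand (a b c : V7) : phi0 a b c =
    a 0*b 1*c 2 - a 0*b 2*c 1 - a 1*b 0*c 2 + a 1*b 2*c 0 + a 2*b 0*c 1 - a 2*b 1*c 0 + a 0*b 3*c 4 - a 0*b 4*c 3 - a 3*b 0*c 4 + a 3*b 4*c 0 + a 4*b 0*c 3 - a 4*b 3*c 0 + a 0*b 5*c 6 - a 0*b 6*c 5 - a 5*b 0*c 6 + a 5*b 6*c 0 + a 6*b 0*c 5 - a 6*b 5*c 0 + a 1*b 3*c 5 - a 1*b 5*c 3 - a 3*b 1*c 5 + a 3*b 5*c 1 + a 5*b 1*c 3 - a 5*b 3*c 1 - a 1*b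 4*c 6 + a 1*b 6*c 4 + a 4*b 1*c 6 - a 4*b 6*c 1 - a 6*b 1*c 4 + a 6*b 4*c 1 - a 2*b 3*c 6 + a 2*b 6*c 3 + a 3*b 2*c 6 - a 3*b 6*c 2 - a 6*b 2*c 3 + a 6*b 3*c 2 - a 2*b 4*c 5 + a 2*b 5*c 4 + a 4*b 2*c 5 - a 4*b 5*c 2 - a 5*b 2*c 4 + a 5*b 4*c 2 := by
  simp [phi0, w3, Matrix.det_fin_three]; ring

lemma psi0_expand (a b c d : V7) : psi0 a b c d =
    a 3*b 4*c 5*d 6 - a 3*b 4*c 6*d 5 - a 3*b 5*c 4*d 6 + a 3*b 5*c 6*d 4 + a 3*b 6*c 4*d 5 - a 3*b 6*c 5*d 4 - a 4*b 3*c 5*d 6 + a 4*b 3*c 6*d 5 + a 4*b 5*c 3*d 6 - a 4*b 5*c 6*d 3 - a 4*b 6*c 3*d 5 + a 4*b 6*c 5*d 3 + a 5*b 3*c 4*d 6 - a 5*b 3*c 6*d 4 - a 5*b 4*c 3*d 6 + a 5*b 4*c 6*d 3 + a 5*b 6*c 3*d 4 - a 5*b 6*c 4*d 3 - a 6*b 3*c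 4*d 5 + a 6*b 3*c 5*d 4 + a 6*b 4*c 3*d 5 - a 6*b 4*c 5*d 3 - a 6*b 5*c 3*d 4 + a 6*b 5*c 4*d 3 + a 1*b 2*c 5*d 6 - a 1*b 2*c 6*d 5 - a 1*b 5*c 2*d 6 + a 1*b 5*c 6*d 2 + a 1*b 6*c 2*d 5 - a 1*b 6*c 5*d 2 - a 2*b 1*c 5*d 6 + a 2*b 1*c 6*d 5 + a 2*b 5*c 1*d 6 - a 2*b 5*c 6*d 1 - a 2*b 6*c 1*d 5 + a 2*b 6*c 5*d 1 + a 5*b 1*c 2*d 6 - a 5*b 1*c 6*d 2 - a 5*b 2*c 1*d 6 + a 5*b 2*c 6*d 1 + a 5*b 6*c 1*d 2 - a 5*b 6*c 2*d 1 - a 6*b 1*c 2*d 5 + a 6*b 1*c 5*d 2 + a 6*b 2*c 1*d 5 - a 6*b 2*c 5*d 1 - a 6*b 5*c 1*d 2 + a 6*b 5*c 2*d 1 + a 1*b 2*c 3*d 4 - a 1*b 2*c 4*d 3 - a 1*b 3*c 2*d 4 + a 1*b 3*c 4*d 2 + a 1*b 4*c 2*d 3 - a 1*b 4*c 3*d 2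 - a 2*b 1*c 3*d 4 + a 2*b 1*c 4*d 3 + a 2*b 3*c 1*d 4 - a 2*b 3*c 4*d 1 - a 2*b 4*c 1*d 3 + a 2*b 4*c 3*d 1 + a 3*b 1*c 2*d 4 - a 3*b 1*c 4*d 2 - a 3*b 2*c 1*d 4 + a 3*b 2*c 4*d 1 + a 3*b 4*c 1*d 2 - a 3*b 4*c 2*d 1 - a 4*b 1*c 2*d 3 + a 4*b 1*c 3*d 2 + a 4*b 2*c 1*d 3 - a 4*b 2*c 3*d 1 - a 4*b 3*c 1*d 2 + a 4*b 3*c 2*d 1 + a 0*b 2*c 4*d 6 - a 0*b 2*c 6*d 4 - a 0*b 4*c 2*d 6 + a 0*b 4*c 6*d 2 + a 0*b 6*c 2*d 4 - a 0*b 6*c 4*d 2 - a 2*b 0*c 4*d 6 + a 2*b 0*c 6*d 4 + a 2*b 4*c 0*d 6 - a 2*b 4*c 6*d 0 - a 2*b 6*c 0*d 4 + a 2*b 6*c 4*d 0 + a 4*b 0*c 2*d 6 - a 4*b 0*c 6*d 2 - a 4*b 2*c 0*d 6 + a 4*b 2*c 6*d 0 + a 4*b 6*c 0*d 2 - a 4*b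 6*c 2*d 0 - a 6*b 0*c 2*d 4 + a 6*b 0*c 4*d 2 + a 6*b 2*c 0*d 4 - a 6*b 2*c 4*d 0 - a 6*b 4*c 0*d 2 + a 6*b 4*c 2*d 0 - a 0*b 2*c 3*d 5 + a 0*b 2*c 5*d 3 + a 0*b 3*c 2*d 5 - a 0*b 3*c 5*d 2 - a 0*b 5*c 2*d 3 + a 0*b 5*c 3*d 2 + a 2*b 0*c 3*d 5 - a 2*b 0*c 5*d 3 - a 2*b 3*c 0*d 5 + a 2*b 3*c 5*d 0 + a 2*b 5*c 0*d 3 - a 2*b 5*c 3*d 0 - a 3*b 0*c 2*d 5 + a 3*b 0*c 5*d 2 + a 3*b 2*c 0*d 5 - a 3*b 2*c 5*d 0 - a 3*b 5*c 0*d 2 + a 3*b 5*c 2*d 0 + a 5*b 0*c 2*d 3 - a 5*b 0*c 3*d 2 - a 5*b 2*c 0*d 3 + a 5*b 2*c 3*d 0 + a 5*b 3*c 0*d 2 - a 5*b 3*c 2*d 0 - a 0*b 1*c 4*d 5 + a 0*b 1*c 5*d 4 + a 0*b 4*c 1*d 5 - a 0*b 4*c 5*d 1 - a 0*b 5*c 1*d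 4 + a 0*b 5*c 4*d 1 + a 1*b 0*c 4*d 5 - a 1*b 0*c 5*d 4 - a 1*b 4*c 0*d 5 + a 1*b 4*c 5*d 0 + a 1*b 5*c 0*d 4 - a 1*b 5*c 4*d 0 - a 4*b 0*c 1*d 5 + a 4*b 0*c 5*d 1 + a 4*b 1*c 0*d 5 - a 4*b 1*c 5*d 0 - a 4*b 5*c 0*d 1 + a 4*b 5*c 1*d 0 + a 5*b 0*c 1*d 4 - a 5*b 0*c 4*d 1 - a 5*b 1*c 0*d 4 + a 5*b 1*c 4*d 0 + a 5*b 4*c 0*d 1 - a 5*b 4*c 1*d 0 - a 0*b 1*c 3*d 6 + a 0*b 1*c 6*d 3 + a 0*b 3*c 1*d 6 - a 0*b 3*c 6*d 1 - a 0*b 6*c 1*d 3 + a 0*b 6*c 3*d 1 + a 1*b 0*c 3*d 6 - a 1*b 0*c 6*d 3 - a 1*b 3*c 0*d 6 + a 1*b 3*c 6*d 0 + a 1*b 6*c 0*d 3 - a 1*b 6*c 3*d 0 - a 3*b 0*c 1*d 6 + a 3*b 0*c 6*d 1 + a 3*b 1*c 0*d 6 - a 3*b 1*c 6*d 0 - a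 3*b 6*c 0*d 1 + a 3*b 6*c 1*d 0 + a 6*b 0*c 1*d 3 - a 6*b 0*c 3*d 1 - a 6*b 1*c 0*d 3 + a 6*b 1*c 3*d 0 + a 6*b 3*c 0*d 1 - a 6*b 3*c 1*d 0 := by
  simp [psi0, w4, det_fin_four']; ring

lemma phi0_p132 (a b c : V7) : phi0 a c b = -phi0 a b c := by
  rw [phi0_expand, phi0_expand]; ring

lemma phi0_p213 (a b c : V7) : phi0 b a c = -phi0 a b c := by
  rw [phi0_expand, phi0_expand]; ring

lemma phi0_p231 (a b c : V7) : phi0 b c a = phi0 a b c := by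
  rw [phi0_expand, phi0_expand]; ring

lemma phi0_p312 (a b c : V7) : phi0 c a b = phi0 a b c := by
  rw [phi0_expand, phi0_expand]; ring

lemma phi0_p321 (a b c : V7) : phi0 c b a = -phi0 a b c := by
  rw [phi0_expand, phi0_expand]; ring

lemma psi0_p1243 (a b c d : V7) : psi0 a b d c = -psi0 a b c d := by
  rw [psi0_expand, psi0_expand]; ring

lemma psi0_p1324 (a b c d : V7) : psi0 a c b d = -psi0 a b c d := by
  rw [psi0_expand, psi0_expand]; ring

lemma psi0_p1342 (a b c d : V7) : psi0 a c d b = psi0 a b c d := by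
  rw [psi0_expand, psi0_expand]; ring

lemma psi0_p1423 (a b c d : V7) : psi0 a d b c = psi0 a b c d := by
  rw [psi0_expand, psi0_expand]; ring

lemma psi0_p1432 (a b c d : V7) : psi0 a d c b = -psi0 a b c d := by
  rw [psi0_expand, psi0_expand]; ring

lemma psi0_p2134 (a b c d : V7) : psi0 b a c d = -psi0 a b c d := by
  rw [psi0_expand, psi0_expand]; ring

lemma psi0_p2143 (a b c d : V7) : psi0 b a d c = psi0 a b c d := by
  rw [psi0_expand, psi0_expand]; ring

lemma psi0_p2314 (a b c d : V7) : psi0 b c a d = psi0 a b c d := by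
  rw [psi0_expand, psi0_expand]; ring

lemma psi0_p2341 (a b c d : V7) : psi0 b c d a = -psi0 a b c d := by
  rw [psi0_expand, psi0_expand]; ring

lemma psi0_p2413 (a b c d : V7) : psi0 b d a c = -psi0 a b c d := by
  rw [psi0_expand, psi0_expand]; ring

lemma psi0_p2431 (a b c d : V7) : psi0 b d c a = psi0 a b c d := by
  rw [psi0_expand, psi0_expand]; ring

lemma psi0_p3124 (a b c d : V7) : psi0 c a b d = psi0 a b c d := by
  rw [psi0_expand, psi0_expand]; ring

lemma psi0_p3142 (a b c d : V7) : psi0 c a d b = -psi0 a b c d := by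
  rw [psi0_expand, psi0_expand]; ring

lemma psi0_p3214 (a b c d : V7) : psi0 c b a d = -psi0 a b c d := by
  rw [psi0_expand, psi0_expand]; ring

lemma psi0_p3241 (a b c d : V7) : psi0 c b d a = psi0 a b c d := by
  rw [psi0_expand, psi0_expand]; ring

lemma psi0_p3412 (a b c d : V7) : psi0 c d a b = psi0 a b c d := by
  rw [psi0_expand, psi0_expand]; ring

lemma psi0_p3421 (a b c d : V7) : psi0 c d b a = -psi0 a b c d := by
  rw [psi0_expand, psi0_expand]; ring

lemma psi0_p4123 (a b c d : V7) : psi0 d a b c = -psi0 a b c d := by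
  rw [psi0_expand, psi0_expand]; ring

lemma psi0_p4132 (a b c d : V7) : psi0 d a c b = psi0 a b c d := by
  rw [psi0_expand, psi0_expand]; ring

lemma psi0_p4213 (a b c d : V7) : psi0 d b a c = psi0 a b c d := by
  rw [psi0_expand, psi0_expand]; ring

lemma psi0_p4231 (a b c d : V7) : psi0 d b c a = -psi0 a b c d := by
  rw [psi0_expand, psi0_expand]; ring

lemma psi0_p4312 (a b c d : V7) : psi0 d c a b = -psi0 a b c d := by
  rw [psi0_expand, psi0_expand]; ring

lemma psi0_p4321 (a b c d : V7) : psi0 d c b a = psi0 a b c d := by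
  rw [psi0_expand, psi0_expand]; ring

def ip0 (a b : V7) : ℝ := (a 1 * b 2 - a 2 * b 1) + (a 3 * b 4 - a 4 * b 3) + (a 5 * b 6 - a 6 * b 5)

def ip1 (a b : V7) : ℝ := - (a 0 * b 2 - a 2 * b 0) + (a 3 * b 5 - a 5 * b 3) - (a 4 * b 6 - a 6 * b 4)

def ip2 (a b : V7) : ℝ := (a 0 * b 1 - a 1 * b 0) - (a 3 * b 6 - a 6 * b 3) - (a 4 * b 5 - a 5 * b 4)

def ip3 (a b : V7) : ℝ := - (a 0 * b 4 - a 4 * b 0) - (a 1 * b 5 - a 5 * b 1) + (a 2 * b 6 - a 6 * b 2)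

def ip4 (a b : V7) : ℝ := (a 0 * b 3 - a 3 * b 0) + (a 1 * b 6 - a 6 * b 1) + (a 2 * b 5 - a 5 * b 2)

def ip5 (a b : V7) : ℝ := - (a 0 * b 6 - a 6 * b 0) + (a 1 * b 3 - a 3 * b 1) - (a 2 * b 4 - a 4 * b 2)

def ip6 (a b : V7) : ℝ := (a 0 * b 5 - a 5 * b 0) - (a 1 * b 4 - a 4 * b 1) - (a 2 * b 3 - a 3 * b 2)

lemma phi0_u (u a b : V7) : phi0 u a b = u 0 * ip0 a b + u 1 * ip1 a b + u 2 * ip2 a b + u 3 * ip3 a b + u 4 * ip4 a b + u 5 * ip5 a b + u 6 * ip6 a b := by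
  rw [phi0_expand]; simp only [ip0, ip1, ip2, ip3, ip4, ip5, ip6]; ring

lemma inner_u (u a : V7) : (⟪u, a⟫ : ℝ) =
    u 0 * a 0 + u 1 * a 1 + u 2 * a 2 + u 3 * a 3 + u 4 * a 4 + u 5 * a 5 + u 6 * a 6 := by
  simp [PiLp.inner_apply, RCLike.inner_apply, Fin.sum_univ_seven]
  ring

lemma coeff0 (x : Fin 5 → V7) :
    ip0 (x 0) (x 1) * phi0 (x 2) (x 3) (x 4) - ip0 (x 0) (x 2) * phi0 (x 1) (x 3) (x 4) + ip0 (x 0) (x 3) * phi0 (x 1) (x 2) (x 4) - ip0 (x 0) (x 4) * phi0 (x 1) (x 2) (x 3) + ip0 (x 1) (x 2) * phi0 (x 0) (x 3) (x 4) - ip0 (x 1) (x 3) * phi0 (x 0) (x 2) (x 4) + ip0 (x 1) (x 4) * phi0 (x 0) (x 2) (x 3) + ip0 (x 2) (x 3) * phi0 (x 0) (x 1) (x 4) - ip0 (x 2) (x 4) * phi0 (x 0) (x 1) (x 3) + ip0 (x 3) (x 4) * phi0 (x 0) (x 1) (x 2) =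
    2 * (x 0 0 * psi0 (x 1) (x 2) (x 3) (x 4) - x 1 0 * psi0 (x 0) (x 2) (x 3) (x 4) + x 2 0 * psi0 (x 0) (x 1) (x 3) (x 4) - x 3 0 * psi0 (x 0) (x 1) (x 2) (x 4) + x 4 0 * psi0 (x 0) (x 1) (x 2) (x 3)) := by
  simp only [phi0_expand, psi0_expand, ip0]
  ring

lemma coeff1 (x : Fin 5 → V7) :
    ip1 (x 0) (x 1) * phi0 (x 2) (x 3) (x 4) - ip1 (x 0) (x 2) * phi0 (x 1) (x 3) (x 4) + ip1 (x 0) (x 3) * phi0 (x 1) (x 2) (x 4) - ip1 (x 0) (x 4) * phi0 (x 1) (x 2) (x 3) + ip1 (x 1) (x 2) * phi0 (x 0) (x 3) (x 4) - ip1 (x 1) (x 3) * phi0 (x 0) (x 2) (x 4) + ip1 (x 1) (x 4) * phi0 (x 0) (x 2) (x 3) + ip1 (x 2) (x 3) * phi0 (x 0) (x 1) (x 4) - ip1 (x 2) (x 4) * phi0 (x 0) (x 1) (x 3) + ip1 (x 3) (x 4) * phi0 (x 0) (x 1) (x 2) =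
    2 * (x 0 1 * psi0 (x 1) (x 2) (x 3) (x 4) - x 1 1 * psi0 (x 0) (x 2) (x 3) (x 4) + x 2 1 * psi0 (x 0) (x 1) (x 3) (x 4) - x 3 1 * psi0 (x 0) (x 1) (x 2) (x 4) + x 4 1 * psi0 (x 0) (x 1) (x 2) (x 3)) := by
  simp only [phi0_expand, psi0_expand, ip1]
  ring

lemma coeff2 (x : Fin 5 → V7) :
    ip2 (x 0) (x 1) * phi0 (x 2) (x 3) (x 4) - ip2 (x 0) (x 2) * phi0 (x 1) (x 3) (x 4) + ip2 (x 0) (x 3) * phi0 (x 1) (x 2) (x 4) - ip2 (x 0) (x 4) * phi0 (x 1) (x 2) (x 3) + ip2 (x 1) (x 2) * phi0 (x 0) (x 3) (x 4) - ip2 (x 1) (x 3) * phi0 (x 0) (x 2) (x 4) + ip2 (x 1) (x 4) * phi0 (x 0) (x 2) (x 3) + ip2 (x 2) (x 3) * phi0 (x 0) (x 1) (x 4) - ip2 (x 2) (x 4) * phi0 (x 0) (x 1) (x 3) + ip2 (x 3) (x 4) * phi0 (x 0) (x 1) (x 2) =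
    2 * (x 0 2 * psi0 (x 1) (x 2) (x 3) (x 4) - x 1 2 * psi0 (x 0) (x 2) (x 3) (x 4) + x 2 2 * psi0 (x 0) (x 1) (x 3) (x 4) - x 3 2 * psi0 (x 0) (x 1) (x 2) (x 4) + x 4 2 * psi0 (x 0) (x 1) (x 2) (x 3)) := by
  simp only [phi0_expand, psi0_expand, ip2]
  ring

lemma coeff3 (x : Fin 5 → V7) :
    ip3 (x 0) (x 1) * phi0 (x 2) (x 3) (x 4) - ip3 (x 0) (x 2) * phi0 (x 1) (x 3) (x 4) + ip3 (x 0) (x 3) * phi0 (x 1) (x 2) (x 4) - ip3 (x 0) (x 4) * phi0 (x 1) (x 2) (x 3) + ip3 (x 1) (x 2) * phi0 (x 0) (x 3) (x 4) - ip3 (x 1) (x 3) * phi0 (x 0) (x 2) (x 4) + ip3 (x 1) (x 4) * phi0 (x 0) (x 2) (x 3) + ip3 (x 2) (x 3) * phi0 (x 0) (x 1) (x 4) - ip3 (x 2) (x 4) * phi0 (x 0) (x 1) (x 3) + ip3 (x 3) (x 4) * phi0 (x 0) (x 1) (x 2) =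
    2 * (x 0 3 * psi0 (x 1) (x 2) (x 3) (x 4) - x 1 3 * psi0 (x 0) (x 2) (x 3) (x 4) + x 2 3 * psi0 (x 0) (x 1) (x 3) (x 4) - x 3 3 * psi0 (x 0) (x 1) (x 2) (x 4) + x 4 3 * psi0 (x 0) (x 1) (x 2) (x 3)) := by
  simp only [phi0_expand, psi0_expand, ip3]
  ring

lemma coeff4 (x : Fin 5 → V7) :
    ip4 (x 0) (x 1) * phi0 (x 2) (x 3) (x 4) - ip4 (x 0) (x 2) * phi0 (x 1) (x 3) (x 4) + ip4 (x 0) (x 3) * phi0 (x 1) (x 2) (x 4) - ip4 (x 0) (x 4) * phi0 (x 1) (x 2) (x 3) + ip4 (x 1) (x 2) * phi0 (x 0) (x 3) (x 4) - ip4 (x 1) (x 3) * phi0 (x 0) (x 2) (x 4) + ip4 (x 1) (x 4) * phi0 (x 0) (x 2) (x 3) + ip4 (x 2) (x 3) * phi0 (x 0) (x 1) (x 4) - ip4 (x 2) (x 4) * phi0 (x 0) (x 1) (x 3) + ip4 (x 3) (x 4) * phi0 (x 0) (x 1) (x 2) =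
    2 * (x 0 4 * psi0 (x 1) (x 2) (x 3) (x 4) - x 1 4 * psi0 (x 0) (x 2) (x 3) (x 4) + x 2 4 * psi0 (x 0) (x 1) (x 3) (x 4) - x 3 4 * psi0 (x 0) (x 1) (x 2) (x 4) + x 4 4 * psi0 (x 0) (x 1) (x 2) (x 3)) := by
  simp only [phi0_expand, psi0_expand, ip4]
  ring

lemma coeff5 (x : Fin 5 → V7) :
    ip5 (x 0) (x 1) * phi0 (x 2) (x 3) (x 4) - ip5 (x 0) (x 2) * phi0 (x 1) (x 3) (x 4) + ip5 (x 0) (x 3) * phi0 (x 1) (x 2) (x 4) - ip5 (x 0) (x 4) * phi0 (x 1) (x 2) (x 3) + ip5 (x 1) (x 2) * phi0 (x 0) (x 3) (x 4) - ip5 (x 1) (x 3) * phi0 (x 0) (x 2) (x 4) + ip5 (x 1) (x 4) * phi0 (x 0) (x 2) (x 3) + ip5 (x 2) (x 3) * phi0 (x 0) (x 1) (x 4) - ip5 (x 2) (x 4) * phi0 (x 0) (x 1) (x 3) + ip5 (x 3) (x 4) * phi0 (x 0) (x 1) (x 2) =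
    2 * (x 0 5 * psi0 (x 1) (x 2) (x 3) (x 4) - x 1 5 * psi0 (x 0) (x 2) (x 3) (x 4) + x 2 5 * psi0 (x 0) (x 1) (x 3) (x 4) - x 3 5 * psi0 (x 0) (x 1) (x 2) (x 4) + x 4 5 * psi0 (x 0) (x 1) (x 2) (x 3)) := by
  simp only [phi0_expand, psi0_expand, ip5]
  ring

lemma coeff6 (x : Fin 5 → V7) :
    ip6 (x 0) (x 1) * phi0 (x 2) (x 3) (x 4) - ip6 (x 0) (x 2) * phi0 (x 1) (x 3) (x 4) + ip6 (x 0) (x 3) * phi0 (x 1) (x 2) (x 4) - ip6 (x 0) (x 4) * phi0 (x 1) (x 2) (x 3) + ip6 (x 1) (x 2) * phi0 (x 0) (x 3) (x 4) - ip6 (x 1) (x 3) * phi0 (x 0) (x 2) (x 4) + ip6 (x 1) (x 4) * phi0 (x 0) (x 2) (x 3) + ip6 (x 2) (x 3) * phi0 (x 0) (x 1) (x 4) - ip6 (x 2) (x 4) * phi0 (x 0) (x 1) (x 3) + ip6 (x 3) (x 4) * phi0 (x 0) (x 1) (x 2) =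
    2 * (x 0 6 * psi0 (x 1) (x 2) (x 3) (x 4) - x 1 6 * psi0 (x 0) (x 2) (x 3) (x 4) + x 2 6 * psi0 (x 0) (x 1) (x 3) (x 4) - x 3 6 * psi0 (x 0) (x 1) (x 2) (x 4) + x 4 6 * psi0 (x 0) (x 1) (x 2) (x 3)) := by
  simp only [phi0_expand, psi0_expand, ip6]
  ring

/-- The 5-form identity (ι_u φ₀) ∧ φ₀ = 2 u^# ∧ ψ₀, i.e. (ξ⌟φ)∧φ = 2∗(ξ⌟φ). -/
theorem iota_phi_wedge_phi (u : V7) (x : Fin 5 → V7) :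
    wedge23 (fun a b => phi0 u a b) phi0 x =
      2 * wedge14 (fun a => (⟪u, a⟫ : ℝ)) psi0 x := by
  have h1 : wedge23 (fun a b => phi0 u a b) phi0 x =
      phi0 u (x 0) (x 1) * phi0 (x 2) (x 3) (x 4) - phi0 u (x 0) (x 2) * phi0 (x 1) (x 3) (x 4) + phi0 u (x 0) (x 3) * phi0 (x 1) (x 2) (x 4) - phi0 u (x 0) (x 4) * phi0 (x 1) (x 2) (x 3) + phi0 u (x 1) (x 2) * phi0 (x 0) (x 3) (x 4) - phi0 u (x 1) (x 3) * phi0 (x 0) (x 2) (x 4) + phi0 u (x 1) (x 4) * phi0 (x 0) (x 2) (x 3) + phi0 u (x 2) (x 3) * phi0 (x 0) (x 1) (x 4) - phi0 u (x 2) (x 4) * phi0 (x 0) (x 1) (x 3) + phi0 u (x 3) (x 4) * phi0 (x 0) (x 1) (x 2) := by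
    rw [permsum23]
    simp only [show phi0 u (x 1) (x 0) = -(phi0 u (x 0) (x 1)) from phi0_p132 u (x 0) (x 1),
      show phi0 u (x 2) (x 0) = -(phi0 u (x 0) (x 2)) from phi0_p132 u (x 0) (x 2),
      show phi0 u (x 3) (x 0) = -(phi0 u (x 0) (x 3)) from phi0_p132 u (x 0) (x 3),
      show phi0 u (x 4) (x 0) = -(phi0 u (x 0) (x 4)) from phi0_p132 u (x 0) (x 4),
      show phi0 u (x 2) (x 1) = -(phi0 u (x 1) (x 2)) from phi0_p132 u (x 1) (x 2),
      show phi0 u (x 3) (x 1) = -(phi0 u (x 1) (x 3)) from phi0_p132 u (x 1) (x 3),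
      show phi0 u (x 4) (x 1) = -(phi0 u (x 1) (x 4)) from phi0_p132 u (x 1) (x 4),
      show phi0 u (x 3) (x 2) = -(phi0 u (x 2) (x 3)) from phi0_p132 u (x 2) (x 3),
      show phi0 u (x 4) (x 2) = -(phi0 u (x 2) (x 4)) from phi0_p132 u (x 2) (x 4),
      show phi0 u (x 4) (x 3) = -(phi0 u (x 3) (x 4)) from phi0_p132 u (x 3) (x 4),
      show phi0 (x 0) (x 2) (x 1) = -(phi0 (x 0) (x 1) (x 2)) from phi0_p132 (x 0) (x 1) (x 2),
      show phi0 (x 1) (x 0) (x 2) = -(phi0 (x 0) (x 1) (x 2)) from phi0_p213 (x 0) (x 1) (x 2),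
      show phi0 (x 1) (x 2) (x 0) = phi0 (x 0) (x 1) (x 2) from phi0_p231 (x 0) (x 1) (x 2),
      show phi0 (x 2) (x 0) (x 1) = phi0 (x 0) (x 1) (x 2) from phi0_p312 (x 0) (x 1) (x 2),
      show phi0 (x 2) (x 1) (x 0) = -(phi0 (x 0) (x 1) (x 2)) from phi0_p321 (x 0) (x 1) (x 2),
      show phi0 (x 0) (x 3) (x 1) = -(phi0 (x 0) (x 1) (x 3)) from phi0_p132 (x 0) (x 1) (x 3),
      show phi0 (x 1) (x 0) (x 3) = -(phi0 (x 0) (x 1) (x 3)) from phi0_p213 (x 0) (x 1) (x 3),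
      show phi0 (x 1) (x 3) (x 0) = phi0 (x 0) (x 1) (x 3) from phi0_p231 (x 0) (x 1) (x 3),
      show phi0 (x 3) (x 0) (x 1) = phi0 (x 0) (x 1) (x 3) from phi0_p312 (x 0) (x 1) (x 3),
      show phi0 (x 3) (x 1) (x 0) = -(phi0 (x 0) (x 1) (x 3)) from phi0_p321 (x 0) (x 1) (x 3),
      show phi0 (x 0) (x 4) (x 1) = -(phi0 (x 0) (x 1) (x 4)) from phi0_p132 (x 0) (x 1) (x 4),
      show phi0 (x 1) (x 0) (x 4) = -(phi0 (x 0) (x 1) (x 4)) from phi0_p213 (x 0) (x 1) (x 4),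
      show phi0 (x 1) (x 4) (x 0) = phi0 (x 0) (x 1) (x 4) from phi0_p231 (x 0) (x 1) (x 4),
      show phi0 (x 4) (x 0) (x 1) = phi0 (x 0) (x 1) (x 4) from phi0_p312 (x 0) (x 1) (x 4),
      show phi0 (x 4) (x 1) (x 0) = -(phi0 (x 0) (x 1) (x 4)) from phi0_p321 (x 0) (x 1) (x 4),
      show phi0 (x 0) (x 3) (x 2) = -(phi0 (x 0) (x 2) (x 3)) from phi0_p132 (x 0) (x 2) (x 3),
      show phi0 (x 2) (x 0) (x 3) = -(phi0 (x 0) (x 2) (x 3)) from phi0_p213 (x 0) (x 2) (x 3),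
      show phi0 (x 2) (x 3) (x 0) = phi0 (x 0) (x 2) (x 3) from phi0_p231 (x 0) (x 2) (x 3),
      show phi0 (x 3) (x 0) (x 2) = phi0 (x 0) (x 2) (x 3) from phi0_p312 (x 0) (x 2) (x 3),
      show phi0 (x 3) (x 2) (x 0) = -(phi0 (x 0) (x 2) (x 3)) from phi0_p321 (x 0) (x 2) (x 3),
      show phi0 (x 0) (x 4) (x 2) = -(phi0 (x 0) (x 2) (x 4)) from phi0_p132 (x 0) (x 2) (x 4),
      show phi0 (x 2) (x 0) (x 4) = -(phi0 (x 0) (x 2) (x 4)) from phi0_p213 (x 0) (x 2) (x 4),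
      show phi0 (x 2) (x 4) (x 0) = phi0 (x 0) (x 2) (x 4) from phi0_p231 (x 0) (x 2) (x 4),
      show phi0 (x 4) (x 0) (x 2) = phi0 (x 0) (x 2) (x 4) from phi0_p312 (x 0) (x 2) (x 4),
      show phi0 (x 4) (x 2) (x 0) = -(phi0 (x 0) (x 2) (x 4)) from phi0_p321 (x 0) (x 2) (x 4),
      show phi0 (x 0) (x 4) (x 3) = -(phi0 (x 0) (x 3) (x 4)) from phi0_p132 (x 0) (x 3) (x 4),
      show phi0 (x 3) (x 0) (x 4) = -(phi0 (x 0) (x 3) (x 4)) from phi0_p213 (x 0) (x 3) (x 4),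
      show phi0 (x 3) (x 4) (x 0) = phi0 (x 0) (x 3) (x 4) from phi0_p231 (x 0) (x 3) (x 4),
      show phi0 (x 4) (x 0) (x 3) = phi0 (x 0) (x 3) (x 4) from phi0_p312 (x 0) (x 3) (x 4),
      show phi0 (x 4) (x 3) (x 0) = -(phi0 (x 0) (x 3) (x 4)) from phi0_p321 (x 0) (x 3) (x 4),
      show phi0 (x 1) (x 3) (x 2) = -(phi0 (x 1) (x 2) (x 3)) from phi0_p132 (x 1) (x 2) (x 3),
      show phi0 (x 2) (x 1) (x 3) = -(phi0 (x 1) (x 2) (x 3)) from phi0_p213 (x 1) (x 2) (x 3),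
      show phi0 (x 2) (x 3) (x 1) = phi0 (x 1) (x 2) (x 3) from phi0_p231 (x 1) (x 2) (x 3),
      show phi0 (x 3) (x 1) (x 2) = phi0 (x 1) (x 2) (x 3) from phi0_p312 (x 1) (x 2) (x 3),
      show phi0 (x 3) (x 2) (x 1) = -(phi0 (x 1) (x 2) (x 3)) from phi0_p321 (x 1) (x 2) (x 3),
      show phi0 (x 1) (x 4) (x 2) = -(phi0 (x 1) (x 2) (x 4)) from phi0_p132 (x 1) (x 2) (x 4),
      show phi0 (x 2) (x 1) (x 4) = -(phi0 (x 1) (x 2) (x 4)) from phi0_p213 (x 1) (x 2) (x 4),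
      show phi0 (x 2) (x 4) (x 1) = phi0 (x 1) (x 2) (x 4) from phi0_p231 (x 1) (x 2) (x 4),
      show phi0 (x 4) (x 1) (x 2) = phi0 (x 1) (x 2) (x 4) from phi0_p312 (x 1) (x 2) (x 4),
      show phi0 (x 4) (x 2) (x 1) = -(phi0 (x 1) (x 2) (x 4)) from phi0_p321 (x 1) (x 2) (x 4),
      show phi0 (x 1) (x 4) (x 3) = -(phi0 (x 1) (x 3) (x 4)) from phi0_p132 (x 1) (x 3) (x 4),
      show phi0 (x 3) (x 1) (x 4) = -(phi0 (x 1) (x 3) (x 4)) from phi0_p213 (x 1) (x 3) (x 4),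
      show phi0 (x 3) (x 4) (x 1) = phi0 (x 1) (x 3) (x 4) from phi0_p231 (x 1) (x 3) (x 4),
      show phi0 (x 4) (x 1) (x 3) = phi0 (x 1) (x 3) (x 4) from phi0_p312 (x 1) (x 3) (x 4),
      show phi0 (x 4) (x 3) (x 1) = -(phi0 (x 1) (x 3) (x 4)) from phi0_p321 (x 1) (x 3) (x 4),
      show phi0 (x 2) (x 4) (x 3) = -(phi0 (x 2) (x 3) (x 4)) from phi0_p132 (x 2) (x 3) (x 4),
      show phi0 (x 3) (x 2) (x 4) = -(phi0 (x 2) (x 3) (x 4)) from phi0_p213 (x 2) (x 3) (x 4),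
      show phi0 (x 3) (x 4) (x 2) = phi0 (x 2) (x 3) (x 4) from phi0_p231 (x 2) (x 3) (x 4),
      show phi0 (x 4) (x 2) (x 3) = phi0 (x 2) (x 3) (x 4) from phi0_p312 (x 2) (x 3) (x 4),
      show phi0 (x 4) (x 3) (x 2) = -(phi0 (x 2) (x 3) (x 4)) from phi0_p321 (x 2) (x 3) (x 4)]
    ring
  have h2 : wedge14 (fun a => (⟪u, a⟫ : ℝ)) psi0 x =
      (⟪u, x 0⟫ : ℝ) * psi0 (x 1) (x 2) (x 3) (x 4) - (⟪u, x 1⟫ : ℝ) * psi0 (x 0) (x 2) (x 3) (x 4) + (⟪u, x 2⟫ : ℝ) * psi0 (x 0) (x 1) (x 3) (x 4) - (⟪u, x 3⟫ : ℝ) * psi0 (x 0) (x 1) (x 2) (x 4) + (⟪u, x 4⟫ : ℝ) * psi0 (x 0) (x 1) (x 2) (x 3) := by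
    rw [permsum14]
    simp only [show psi0 (x 0) (x 1) (x 3) (x 2) = -(psi0 (x 0) (x 1) (x 2) (x 3)) from psi0_p1243 (x 0) (x 1) (x 2) (x 3),
      show psi0 (x 0) (x 2) (x 1) (x 3) = -(psi0 (x 0) (x 1) (x 2) (x 3)) from psi0_p1324 (x 0) (x 1) (x 2) (x 3),
      show psi0 (x 0) (x 2) (x 3) (x 1) = psi0 (x 0) (x 1) (x 2) (x 3) from psi0_p1342 (x 0) (x 1) (x 2) (x 3),
      show psi0 (x 0) (x 3) (x 1) (x 2) = psi0 (x 0) (x 1) (x 2) (x 3) from psi0_p1423 (x 0) (x 1) (x 2) (x 3),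
      show psi0 (x 0) (x 3) (x 2) (x 1) = -(psi0 (x 0) (x 1) (x 2) (x 3)) from psi0_p1432 (x 0) (x 1) (x 2) (x 3),
      show psi0 (x 1) (x 0) (x 2) (x 3) = -(psi0 (x 0) (x 1) (x 2) (x 3)) from psi0_p2134 (x 0) (x 1) (x 2) (x 3),
      show psi0 (x 1) (x 0) (x 3) (x 2) = psi0 (x 0) (x 1) (x 2) (x 3) from psi0_p2143 (x 0) (x 1) (x 2) (x 3),
      show psi0 (x 1) (x 2) (x 0) (x 3) = psi0 (x 0) (x 1) (x 2) (x 3) from psi0_p2314 (x 0) (x 1) (x 2) (x 3),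
      show psi0 (x 1) (x 2) (x 3) (x 0) = -(psi0 (x 0) (x 1) (x 2) (x 3)) from psi0_p2341 (x 0) (x 1) (x 2) (x 3),
      show psi0 (x 1) (x 3) (x 0) (x 2) = -(psi0 (x 0) (x 1) (x 2) (x 3)) from psi0_p2413 (x 0) (x 1) (x 2) (x 3),
      show psi0 (x 1) (x 3) (x 2) (x 0) = psi0 (x 0) (x 1) (x 2) (x 3) from psi0_p2431 (x 0) (x 1) (x 2) (x 3),
      show psi0 (x 2) (x 0) (x 1) (x 3) = psi0 (x 0) (x 1) (x 2) (x 3) from psi0_p3124 (x 0) (x 1) (x 2) (x 3),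
      show psi0 (x 2) (x 0) (x 3) (x 1) = -(psi0 (x 0) (x 1) (x 2) (x 3)) from psi0_p3142 (x 0) (x 1) (x 2) (x 3),
      show psi0 (x 2) (x 1) (x 0) (x 3) = -(psi0 (x 0) (x 1) (x 2) (x 3)) from psi0_p3214 (x 0) (x 1) (x 2) (x 3),
      show psi0 (x 2) (x 1) (x 3) (x 0) = psi0 (x 0) (x 1) (x 2) (x 3) from psi0_p3241 (x 0) (x 1) (x 2) (x 3),
      show psi0 (x 2) (x 3) (x 0) (x 1) = psi0 (x 0) (x 1) (x 2) (x 3) from psi0_p3412 (x 0) (x 1) (x 2) (x 3),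
      show psi0 (x 2) (x 3) (x 1) (x 0) = -(psi0 (x 0) (x 1) (x 2) (x 3)) from psi0_p3421 (x 0) (x 1) (x 2) (x 3),
      show psi0 (x 3) (x 0) (x 1) (x 2) = -(psi0 (x 0) (x 1) (x 2) (x 3)) from psi0_p4123 (x 0) (x 1) (x 2) (x 3),
      show psi0 (x 3) (x 0) (x 2) (x 1) = psi0 (x 0) (x 1) (x 2) (x 3) from psi0_p4132 (x 0) (x 1) (x 2) (x 3),
      show psi0 (x 3) (x 1) (x 0) (x 2) = psi0 (x 0) (x 1) (x 2) (x 3) from psi0_p4213 (x 0) (x 1) (x 2) (x 3),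
      show psi0 (x 3) (x 1) (x 2) (x 0) = -(psi0 (x 0) (x 1) (x 2) (x 3)) from psi0_p4231 (x 0) (x 1) (x 2) (x 3),
      show psi0 (x 3) (x 2) (x 0) (x 1) = -(psi0 (x 0) (x 1) (x 2) (x 3)) from psi0_p4312 (x 0) (x 1) (x 2) (x 3),
      show psi0 (x 3) (x 2) (x 1) (x 0) = psi0 (x 0) (x 1) (x 2) (x 3) from psi0_p4321 (x 0) (x 1) (x 2) (x 3),
      show psi0 (x 0) (x 1) (x 4) (x 2) = -(psi0 (x 0) (x 1) (x 2) (x 4)) from psi0_p1243 (x 0) (x 1) (x 2) (x 4),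
      show psi0 (x 0) (x 2) (x 1) (x 4) = -(psi0 (x 0) (x 1) (x 2) (x 4)) from psi0_p1324 (x 0) (x 1) (x 2) (x 4),
      show psi0 (x 0) (x 2) (x 4) (x 1) = psi0 (x 0) (x 1) (x 2) (x 4) from psi0_p1342 (x 0) (x 1) (x 2) (x 4),
      show psi0 (x 0) (x 4) (x 1) (x 2) = psi0 (x 0) (x 1) (x 2) (x 4) from psi0_p1423 (x 0) (x 1) (x 2) (x 4),
      show psi0 (x 0) (x 4) (x 2) (x 1) = -(psi0 (x 0) (x 1) (x 2) (x 4)) from psi0_p1432 (x 0) (x 1) (x 2) (x 4),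
      show psi0 (x 1) (x 0) (x 2) (x 4) = -(psi0 (x 0) (x 1) (x 2) (x 4)) from psi0_p2134 (x 0) (x 1) (x 2) (x 4),
      show psi0 (x 1) (x 0) (x 4) (x 2) = psi0 (x 0) (x 1) (x 2) (x 4) from psi0_p2143 (x 0) (x 1) (x 2) (x 4),
      show psi0 (x 1) (x 2) (x 0) (x 4) = psi0 (x 0) (x 1) (x 2) (x 4) from psi0_p2314 (x 0) (x 1) (x 2) (x 4),
      show psi0 (x 1) (x 2) (x 4) (x 0) = -(psi0 (x 0) (x 1) (x 2) (x 4)) from psi0_p2341 (x 0) (x 1) (x 2) (x 4),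
      show psi0 (x 1) (x 4) (x 0) (x 2) = -(psi0 (x 0) (x 1) (x 2) (x 4)) from psi0_p2413 (x 0) (x 1) (x 2) (x 4),
      show psi0 (x 1) (x 4) (x 2) (x 0) = psi0 (x 0) (x 1) (x 2) (x 4) from psi0_p2431 (x 0) (x 1) (x 2) (x 4),
      show psi0 (x 2) (x 0) (x 1) (x 4) = psi0 (x 0) (x 1) (x 2) (x 4) from psi0_p3124 (x 0) (x 1) (x 2) (x 4),
      show psi0 (x 2) (x 0) (x 4) (x 1) = -(psi0 (x 0) (x 1) (x 2) (x 4)) from psi0_p3142 (x 0) (x 1) (x 2) (x 4),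
      show psi0 (x 2) (x 1) (x 0) (x 4) = -(psi0 (x 0) (x 1) (x 2) (x 4)) from psi0_p3214 (x 0) (x 1) (x 2) (x 4),
      show psi0 (x 2) (x 1) (x 4) (x 0) = psi0 (x 0) (x 1) (x 2) (x 4) from psi0_p3241 (x 0) (x 1) (x 2) (x 4),
      show psi0 (x 2) (x 4) (x 0) (x 1) = psi0 (x 0) (x 1) (x 2) (x 4) from psi0_p3412 (x 0) (x 1) (x 2) (x 4),
      show psi0 (x 2) (x 4) (x 1) (x 0) = -(psi0 (x 0) (x 1) (x 2) (x 4)) from psi0_p3421 (x 0) (x 1) (x 2) (x 4),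
      show psi0 (x 4) (x 0) (x 1) (x 2) = -(psi0 (x 0) (x 1) (x 2) (x 4)) from psi0_p4123 (x 0) (x 1) (x 2) (x 4),
      show psi0 (x 4) (x 0) (x 2) (x 1) = psi0 (x 0) (x 1) (x 2) (x 4) from psi0_p4132 (x 0) (x 1) (x 2) (x 4),
      show psi0 (x 4) (x 1) (x 0) (x 2) = psi0 (x 0) (x 1) (x 2) (x 4) from psi0_p4213 (x 0) (x 1) (x 2) (x 4),
      show psi0 (x 4) (x 1) (x 2) (x 0) = -(psi0 (x 0) (x 1) (x 2) (x 4)) from psi0_p4231 (x 0) (x 1) (x 2) (x 4),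
      show psi0 (x 4) (x 2) (x 0) (x 1) = -(psi0 (x 0) (x 1) (x 2) (x 4)) from psi0_p4312 (x 0) (x 1) (x 2) (x 4),
      show psi0 (x 4) (x 2) (x 1) (x 0) = psi0 (x 0) (x 1) (x 2) (x 4) from psi0_p4321 (x 0) (x 1) (x 2) (x 4),
      show psi0 (x 0) (x 1) (x 4) (x 3) = -(psi0 (x 0) (x 1) (x 3) (x 4)) from psi0_p1243 (x 0) (x 1) (x 3) (x 4),
      show psi0 (x 0) (x 3) (x 1) (x 4) = -(psi0 (x 0) (x 1) (x 3) (x 4)) from psi0_p1324 (x 0) (x 1) (x 3) (x 4),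
      show psi0 (x 0) (x 3) (x 4) (x 1) = psi0 (x 0) (x 1) (x 3) (x 4) from psi0_p1342 (x 0) (x 1) (x 3) (x 4),
      show psi0 (x 0) (x 4) (x 1) (x 3) = psi0 (x 0) (x 1) (x 3) (x 4) from psi0_p1423 (x 0) (x 1) (x 3) (x 4),
      show psi0 (x 0) (x 4) (x 3) (x 1) = -(psi0 (x 0) (x 1) (x 3) (x 4)) from psi0_p1432 (x 0) (x 1) (x 3) (x 4),
      show psi0 (x 1) (x 0) (x 3) (x 4) = -(psi0 (x 0) (x 1) (x 3) (x 4)) from psi0_p2134 (x 0) (x 1) (x 3) (x 4),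
      show psi0 (x 1) (x 0) (x 4) (x 3) = psi0 (x 0) (x 1) (x 3) (x 4) from psi0_p2143 (x 0) (x 1) (x 3) (x 4),
      show psi0 (x 1) (x 3) (x 0) (x 4) = psi0 (x 0) (x 1) (x 3) (x 4) from psi0_p2314 (x 0) (x 1) (x 3) (x 4),
      show psi0 (x 1) (x 3) (x 4) (x 0) = -(psi0 (x 0) (x 1) (x 3) (x 4)) from psi0_p2341 (x 0) (x 1) (x 3) (x 4),
      show psi0 (x 1) (x 4) (x 0) (x 3) = -(psi0 (x 0) (x 1) (x 3) (x 4)) from psi0_p2413 (x 0) (x 1) (x 3) (x 4),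
      show psi0 (x 1) (x 4) (x 3) (x 0) = psi0 (x 0) (x 1) (x 3) (x 4) from psi0_p2431 (x 0) (x 1) (x 3) (x 4),
      show psi0 (x 3) (x 0) (x 1) (x 4) = psi0 (x 0) (x 1) (x 3) (x 4) from psi0_p3124 (x 0) (x 1) (x 3) (x 4),
      show psi0 (x 3) (x 0) (x 4) (x 1) = -(psi0 (x 0) (x 1) (x 3) (x 4)) from psi0_p3142 (x 0) (x 1) (x 3) (x 4),
      show psi0 (x 3) (x 1) (x 0) (x 4) = -(psi0 (x 0) (x 1) (x 3) (x 4)) from psi0_p3214 (x 0) (x 1) (x 3) (x 4),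
      show psi0 (x 3) (x 1) (x 4) (x 0) = psi0 (x 0) (x 1) (x 3) (x 4) from psi0_p3241 (x 0) (x 1) (x 3) (x 4),
      show psi0 (x 3) (x 4) (x 0) (x 1) = psi0 (x 0) (x 1) (x 3) (x 4) from psi0_p3412 (x 0) (x 1) (x 3) (x 4),
      show psi0 (x 3) (x 4) (x 1) (x 0) = -(psi0 (x 0) (x 1) (x 3) (x 4)) from psi0_p3421 (x 0) (x 1) (x 3) (x 4),
      show psi0 (x 4) (x 0) (x 1) (x 3) = -(psi0 (x 0) (x 1) (x 3) (x 4)) from psi0_p4123 (x 0) (x 1) (x 3) (x 4),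
      show psi0 (x 4) (x 0) (x 3) (x 1) = psi0 (x 0) (x 1) (x 3) (x 4) from psi0_p4132 (x 0) (x 1) (x 3) (x 4),
      show psi0 (x 4) (x 1) (x 0) (x 3) = psi0 (x 0) (x 1) (x 3) (x 4) from psi0_p4213 (x 0) (x 1) (x 3) (x 4),
      show psi0 (x 4) (x 1) (x 3) (x 0) = -(psi0 (x 0) (x 1) (x 3) (x 4)) from psi0_p4231 (x 0) (x 1) (x 3) (x 4),
      show psi0 (x 4) (x 3) (x 0) (x 1) = -(psi0 (x 0) (x 1) (x 3) (x 4)) from psi0_p4312 (x 0) (x 1) (x 3) (x 4),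
      show psi0 (x 4) (x 3) (x 1) (x 0) = psi0 (x 0) (x 1) (x 3) (x 4) from psi0_p4321 (x 0) (x 1) (x 3) (x 4),
      show psi0 (x 0) (x 2) (x 4) (x 3) = -(psi0 (x 0) (x 2) (x 3) (x 4)) from psi0_p1243 (x 0) (x 2) (x 3) (x 4),
      show psi0 (x 0) (x 3) (x 2) (x 4) = -(psi0 (x 0) (x 2) (x 3) (x 4)) from psi0_p1324 (x 0) (x 2) (x 3) (x 4),
      show psi0 (x 0) (x 3) (x 4) (x 2) = psi0 (x 0) (x 2) (x 3) (x 4) from psi0_p1342 (x 0) (x 2) (x 3) (x 4),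
      show psi0 (x 0) (x 4) (x 2) (x 3) = psi0 (x 0) (x 2) (x 3) (x 4) from psi0_p1423 (x 0) (x 2) (x 3) (x 4),
      show psi0 (x 0) (x 4) (x 3) (x 2) = -(psi0 (x 0) (x 2) (x 3) (x 4)) from psi0_p1432 (x 0) (x 2) (x 3) (x 4),
      show psi0 (x 2) (x 0) (x 3) (x 4) = -(psi0 (x 0) (x 2) (x 3) (x 4)) from psi0_p2134 (x 0) (x 2) (x 3) (x 4),
      show psi0 (x 2) (x 0) (x 4) (x 3) = psi0 (x 0) (x 2) (x 3) (x 4) from psi0_p2143 (x 0) (x 2) (x 3) (x 4),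
      show psi0 (x 2) (x 3) (x 0) (x 4) = psi0 (x 0) (x 2) (x 3) (x 4) from psi0_p2314 (x 0) (x 2) (x 3) (x 4),
      show psi0 (x 2) (x 3) (x 4) (x 0) = -(psi0 (x 0) (x 2) (x 3) (x 4)) from psi0_p2341 (x 0) (x 2) (x 3) (x 4),
      show psi0 (x 2) (x 4) (x 0) (x 3) = -(psi0 (x 0) (x 2) (x 3) (x 4)) from psi0_p2413 (x 0) (x 2) (x 3) (x 4),
      show psi0 (x 2) (x 4) (x 3) (x 0) = psi0 (x 0) (x 2) (x 3) (x 4) from psi0_p2431 (x 0) (x 2) (x 3) (x 4),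
      show psi0 (x 3) (x 0) (x 2) (x 4) = psi0 (x 0) (x 2) (x 3) (x 4) from psi0_p3124 (x 0) (x 2) (x 3) (x 4),
      show psi0 (x 3) (x 0) (x 4) (x 2) = -(psi0 (x 0) (x 2) (x 3) (x 4)) from psi0_p3142 (x 0) (x 2) (x 3) (x 4),
      show psi0 (x 3) (x 2) (x 0) (x 4) = -(psi0 (x 0) (x 2) (x 3) (x 4)) from psi0_p3214 (x 0) (x 2) (x 3) (x 4),
      show psi0 (x 3) (x 2) (x 4) (x 0) = psi0 (x 0) (x 2) (x 3) (x 4) from psi0_p3241 (x 0) (x 2) (x 3) (x 4),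
      show psi0 (x 3) (x 4) (x 0) (x 2) = psi0 (x 0) (x 2) (x 3) (x 4) from psi0_p3412 (x 0) (x 2) (x 3) (x 4),
      show psi0 (x 3) (x 4) (x 2) (x 0) = -(psi0 (x 0) (x 2) (x 3) (x 4)) from psi0_p3421 (x 0) (x 2) (x 3) (x 4),
      show psi0 (x 4) (x 0) (x 2) (x 3) = -(psi0 (x 0) (x 2) (x 3) (x 4)) from psi0_p4123 (x 0) (x 2) (x 3) (x 4),
      show psi0 (x 4) (x 0) (x 3) (x 2) = psi0 (x 0) (x 2) (x 3) (x 4) from psi0_p4132 (x 0) (x 2) (x 3) (x 4),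
      show psi0 (x 4) (x 2) (x 0) (x 3) = psi0 (x 0) (x 2) (x 3) (x 4) from psi0_p4213 (x 0) (x 2) (x 3) (x 4),
      show psi0 (x 4) (x 2) (x 3) (x 0) = -(psi0 (x 0) (x 2) (x 3) (x 4)) from psi0_p4231 (x 0) (x 2) (x 3) (x 4),
      show psi0 (x 4) (x 3) (x 0) (x 2) = -(psi0 (x 0) (x 2) (x 3) (x 4)) from psi0_p4312 (x 0) (x 2) (x 3) (x 4),
      show psi0 (x 4) (x 3) (x 2) (x 0) = psi0 (x 0) (x 2) (x 3) (x 4) from psi0_p4321 (x 0) (x 2) (x 3) (x 4),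
      show psi0 (x 1) (x 2) (x 4) (x 3) = -(psi0 (x 1) (x 2) (x 3) (x 4)) from psi0_p1243 (x 1) (x 2) (x 3) (x 4),
      show psi0 (x 1) (x 3) (x 2) (x 4) = -(psi0 (x 1) (x 2) (x 3) (x 4)) from psi0_p1324 (x 1) (x 2) (x 3) (x 4),
      show psi0 (x 1) (x 3) (x 4) (x 2) = psi0 (x 1) (x 2) (x 3) (x 4) from psi0_p1342 (x 1) (x 2) (x 3) (x 4),
      show psi0 (x 1) (x 4) (x 2) (x 3) = psi0 (x 1) (x 2) (x 3) (x 4) from psi0_p1423 (x 1) (x 2) (x 3) (x 4),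
      show psi0 (x 1) (x 4) (x 3) (x 2) = -(psi0 (x 1) (x 2) (x 3) (x 4)) from psi0_p1432 (x 1) (x 2) (x 3) (x 4),
      show psi0 (x 2) (x 1) (x 3) (x 4) = -(psi0 (x 1) (x 2) (x 3) (x 4)) from psi0_p2134 (x 1) (x 2) (x 3) (x 4),
      show psi0 (x 2) (x 1) (x 4) (x 3) = psi0 (x 1) (x 2) (x 3) (x 4) from psi0_p2143 (x 1) (x 2) (x 3) (x 4),
      show psi0 (x 2) (x 3) (x 1) (x 4) = psi0 (x 1) (x 2) (x 3) (x 4) from psi0_p2314 (x 1) (x 2) (x 3) (x 4),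
      show psi0 (x 2) (x 3) (x 4) (x 1) = -(psi0 (x 1) (x 2) (x 3) (x 4)) from psi0_p2341 (x 1) (x 2) (x 3) (x 4),
      show psi0 (x 2) (x 4) (x 1) (x 3) = -(psi0 (x 1) (x 2) (x 3) (x 4)) from psi0_p2413 (x 1) (x 2) (x 3) (x 4),
      show psi0 (x 2) (x 4) (x 3) (x 1) = psi0 (x 1) (x 2) (x 3) (x 4) from psi0_p2431 (x 1) (x 2) (x 3) (x 4),
      show psi0 (x 3) (x 1) (x 2) (x 4) = psi0 (x 1) (x 2) (x 3) (x 4) from psi0_p3124 (x 1) (x 2) (x 3) (x 4),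
      show psi0 (x 3) (x 1) (x 4) (x 2) = -(psi0 (x 1) (x 2) (x 3) (x 4)) from psi0_p3142 (x 1) (x 2) (x 3) (x 4),
      show psi0 (x 3) (x 2) (x 1) (x 4) = -(psi0 (x 1) (x 2) (x 3) (x 4)) from psi0_p3214 (x 1) (x 2) (x 3) (x 4),
      show psi0 (x 3) (x 2) (x 4) (x 1) = psi0 (x 1) (x 2) (x 3) (x 4) from psi0_p3241 (x 1) (x 2) (x 3) (x 4),
      show psi0 (x 3) (x 4) (x 1) (x 2) = psi0 (x 1) (x 2) (x 3) (x 4) from psi0_p3412 (x 1) (x 2) (x 3) (x 4),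
      show psi0 (x 3) (x 4) (x 2) (x 1) = -(psi0 (x 1) (x 2) (x 3) (x 4)) from psi0_p3421 (x 1) (x 2) (x 3) (x 4),
      show psi0 (x 4) (x 1) (x 2) (x 3) = -(psi0 (x 1) (x 2) (x 3) (x 4)) from psi0_p4123 (x 1) (x 2) (x 3) (x 4),
      show psi0 (x 4) (x 1) (x 3) (x 2) = psi0 (x 1) (x 2) (x 3) (x 4) from psi0_p4132 (x 1) (x 2) (x 3) (x 4),
      show psi0 (x 4) (x 2) (x 1) (x 3) = psi0 (x 1) (x 2) (x 3) (x 4) from psi0_p4213 (x 1) (x 2) (x 3) (x 4),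
      show psi0 (x 4) (x 2) (x 3) (x 1) = -(psi0 (x 1) (x 2) (x 3) (x 4)) from psi0_p4231 (x 1) (x 2) (x 3) (x 4),
      show psi0 (x 4) (x 3) (x 1) (x 2) = -(psi0 (x 1) (x 2) (x 3) (x 4)) from psi0_p4312 (x 1) (x 2) (x 3) (x 4),
      show psi0 (x 4) (x 3) (x 2) (x 1) = psi0 (x 1) (x 2) (x 3) (x 4) from psi0_p4321 (x 1) (x 2) (x 3) (x 4)]
    ring
  rw [h1, h2]
  simp only [show phi0 u (x 0) (x 1) = _ from phi0_u u (x 0) (x 1),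
      show phi0 u (x 0) (x 2) = _ from phi0_u u (x 0) (x 2),
      show phi0 u (x 0) (x 3) = _ from phi0_u u (x 0) (x 3),
      show phi0 u (x 0) (x 4) = _ from phi0_u u (x 0) (x 4),
      show phi0 u (x 1) (x 2) = _ from phi0_u u (x 1) (x 2),
      show phi0 u (x 1) (x 3) = _ from phi0_u u (x 1) (x 3),
      show phi0 u (x 1) (x 4) = _ from phi0_u u (x 1) (x 4),
      show phi0 u (x 2) (x 3) = _ from phi0_u u (x 2) (x 3),
      show phi0 u (x 2) (x 4) = _ from phi0_u u (x 2) (x 4),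
      show phi0 u (x 3) (x 4) = _ from phi0_u u (x 3) (x 4),
      show (⟪u, x 0⟫ : ℝ) = _ from inner_u u (x 0),
      show (⟪u, x 1⟫ : ℝ) = _ from inner_u u (x 1),
      show (⟪u, x 2⟫ : ℝ) = _ from inner_u u (x 2),
      show (⟪u, x 3⟫ : ℝ) = _ from inner_u u (x 3),
      show (⟪u, x 4⟫ : ℝ) = _ from inner_u u (x 4)]
  linear_combination u 0 * coeff0 x + u 1 * coeff1 x + u 2 * coeff2 x + u 3 * coeff3 x + u 4 * coeff4 x + u 5 * coeff5 x + u 6 * coeff6 x
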